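/- The map m ↦ F_m = {U ∈ CO(X) : 1_U ∉ m} is a bijection from the set of maximal ideals of C_bd(X,k) onto the set UF(X) of ultrafilters of the Boolean algebra of clopen subsets of X. -/

import Mathlib

open Set Topology BoundedContinuousFunction

/-- An ultrafilter of the Boolean algebra `CO(X)` of clopen subsets of `X`: a family of
clopen sets not containing `∅`, closed under binary intersections, upward closed (within
clopen sets), and containing `U` or `Uᶜ` for every clopen `U`. -/
structure ClopenUltrafilter (X : Type*) [TopologicalSpace X] where
  sets : Set (Set X)
  isClopen_of_mem : ∀ U ∈ sets, IsClopen U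
  empty_not_mem : ∅ ∉ sets
  inter_mem : ∀ U ∈ sets, ∀ V ∈ sets, U ∩ V ∈ sets
  mem_of_superset : ∀ U ∈ sets, ∀ V : Set X, IsClopen V → U ⊆ V → V ∈ sets
  mem_or_compl_mem : ∀ U : Set X, IsClopen U → U ∈ sets ∨ Uᶜ ∈ sets

/-- The topology on `UF(X)` with open basis the sets `{F : U ∈ F}` for `U` clopen. -/
instance (X : Type*) [TopologicalSpace X] : TopologicalSpace (ClopenUltrafilter X) :=
  TopologicalSpace.generateFrom
    {S | ∃ U : Set X, IsClopen U ∧ S = {F : ClopenUltrafilter X | U ∈ F.sets}}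

/-- The principal ultrafilter of clopen sets at a point `x`. -/
def principalCU (X : Type*) [TopologicalSpace X] (x : X) : ClopenUltrafilter X where
  sets := {U : Set X | IsClopen U ∧ x ∈ U}
  isClopen_of_mem := fun _ hU => hU.1
  empty_not_mem := fun h => Set.notMem_empty x h.2
  inter_mem := fun U hU V hV => ⟨hU.1.inter hV.1, hU.2, hV.2⟩
  mem_of_superset := fun U hU V hV hUV => ⟨hV, hUV hU.2⟩
  mem_or_compl_mem := fun U hU => by
    by_cases hx : x ∈ U
    · exact Or.inl ⟨hU, hx⟩
    · exact Or.inr ⟨hU.compl, hx⟩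

/-- A cluster point of an ultrafilter of clopen sets: a point all of whose clopen
neighbourhoods belong to the ultrafilter. -/
def ClopenUltrafilter.IsClusterPoint {X : Type*} [TopologicalSpace X]
    (F : ClopenUltrafilter X) (x : X) : Prop :=
  ∀ U : Set X, IsClopen U → x ∈ U → U ∈ F.sets

/-- The indicator function of a clopen set, as a bounded continuous `k`-valued function. -/
noncomputable def indicatorBCF {X : Type*} [TopologicalSpace X] (k : Type*) [NormedField k]
    {U : Set X} (hU : IsClopen U) : BoundedContinuousFunction X k where
  toFun := U.indicator 1
  continuous_toFun := continuous_indicator (by simp [hU]) continuous_const.continuousOn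
  map_bounded' := ⟨1, fun x y => by
    by_cases hx : x ∈ U <;> by_cases hy : y ∈ U <;>
      simp [hx, hy, dist_eq_norm, Set.indicator_of_mem, Set.indicator_of_notMem]⟩

/-- The family `F_m = {U ∈ CO(X) : 1_U ∉ m}` attached to an ideal `m` of `C_bd(X,k)`. -/
def idealUF {X : Type*} [TopologicalSpace X] (k : Type*) [NormedField k]
    (m : Ideal (BoundedContinuousFunction X k)) : Set (Set X) :=
  {U : Set X | ∃ hU : IsClopen U, indicatorBCF k hU ∉ m}

/-- `‖f‖_F = inf_{U ∈ F} sup_{x ∈ U} ‖f x‖`. -/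
noncomputable def ufSeminorm {X : Type*} [TopologicalSpace X] (k : Type*) [NormedField k]
    (F : ClopenUltrafilter X) (f : BoundedContinuousFunction X k) : ℝ :=
  ⨅ U ∈ F.sets, ⨆ x ∈ U, ‖f x‖

/-!
The inverse map sends a clopen ultrafilter `F` to the ideal of functions tending to `0` along `F`.
Because `k` is ultrametric, a function `f` that does not tend to `0` stays above some `ε > 0` on
the clopen set `W = {ε ≤ ‖f‖}`, which then lies in `F`; inverting `f` on `W` gives `f * g = 1_W`.
As `1 - 1_W` tends to `0`, `f` is invertible modulo the ideal, which is therefore maximal; and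
since `1_W ∉ m` when `W ∈ F_m`, every maximal ideal `m` lies in, hence equals, the ideal attached
to `F_m`.
-/

namespace ClopenUltrafilter

variable {X : Type*} [TopologicalSpace X] (F : ClopenUltrafilter X)

theorem ext {F G : ClopenUltrafilter X} (h : F.sets = G.sets) : F = G := by
  cases F; cases G; simpa using h

theorem univ_mem : univ ∈ F.sets :=
  (F.mem_or_compl_mem univ isClopen_univ).resolve_right (by simpa using F.empty_not_mem)

theorem compl_notMem {U : Set X} (hU : U ∈ F.sets) : Uᶜ ∉ F.sets := fun hUc =>
  F.empty_not_mem (by simpa using F.inter_mem U hU _ hUc)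

theorem notMem_iff_compl_mem {U : Set X} (hU : IsClopen U) : U ∉ F.sets ↔ Uᶜ ∈ F.sets :=
  ⟨(F.mem_or_compl_mem U hU).resolve_left, fun hUc hU => F.compl_notMem hU hUc⟩

def toFilter : Filter X where
  sets := {S | ∃ U ∈ F.sets, U ⊆ S}
  univ_sets := ⟨univ, F.univ_mem, subset_rfl⟩
  sets_of_superset := fun ⟨U, hU, hUS⟩ hST => ⟨U, hU, hUS.trans hST⟩
  inter_sets := fun ⟨U, hU, hUS⟩ ⟨V, hV, hVT⟩ =>
    ⟨U ∩ V, F.inter_mem U hU V hV, inter_subset_inter hUS hVT⟩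

theorem mem_toFilter_of_mem {U : Set X} (hU : U ∈ F.sets) : U ∈ F.toFilter :=
  ⟨U, hU, subset_rfl⟩

instance : F.toFilter.NeBot :=
  Filter.forall_mem_nonempty_iff_neBot.mp fun _ ⟨_, hU, hUS⟩ =>
    (nonempty_iff_ne_empty.mpr fun h => F.empty_not_mem (h ▸ hU)).mono hUS

end ClopenUltrafilter

section IndicatorBCF

variable {X : Type*} [TopologicalSpace X] {k : Type*} [NormedField k] {U V : Set X}

theorem coe_indicatorBCF (hU : IsClopen U) : ⇑(indicatorBCF k hU) = U.indicator 1 := rfl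

theorem indicatorBCF_empty : indicatorBCF k (isClopen_empty : IsClopen (∅ : Set X)) = 0 := by
  ext x; simp [coe_indicatorBCF]

theorem indicatorBCF_mul (hU : IsClopen U) (hV : IsClopen V) :
    indicatorBCF k hU * indicatorBCF k hV = indicatorBCF k (hU.inter hV) := by
  ext x; by_cases hx : x ∈ U <;> by_cases hy : x ∈ V <;> simp [coe_indicatorBCF, hx, hy]

theorem indicatorBCF_mul_of_subset (hU : IsClopen U) (hV : IsClopen V) (hUV : U ⊆ V) :
    indicatorBCF k hU * indicatorBCF k hV = indicatorBCF k hU := by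
  ext x; by_cases hx : x ∈ U
  · simp [coe_indicatorBCF, hx, hUV hx]
  · simp [coe_indicatorBCF, hx]

theorem indicatorBCF_add_compl (hU : IsClopen U) :
    indicatorBCF k hU + indicatorBCF k hU.compl = 1 := by
  ext x; by_cases hx : x ∈ U <;> simp [coe_indicatorBCF, hx]

end IndicatorBCF

theorem isClopen_setOf_le_norm {X E : Type*} [TopologicalSpace X] [SeminormedAddCommGroup E]
    [IsUltrametricDist E] {f : X → E} (hf : Continuous f) (ε : ℝ) : IsClopen {x | ε ≤ ‖f x‖} := by
  have : {x | ε ≤ ‖f x‖} = (f ⁻¹' Metric.ball 0 ε)ᶜ := by ext; simp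
  rw [this]
  exact ((IsUltrametricDist.isClopen_ball 0 ε).preimage hf).compl

namespace BoundedContinuousFunction

variable {X : Type*} [TopologicalSpace X] (k : Type*) [NormedField k]

def tendstoZeroIdeal (l : Filter X) : Ideal (X →ᵇ k) where
  carrier := {f | Filter.Tendsto f l (𝓝 0)}
  zero_mem' := tendsto_const_nhds
  add_mem' {f g} hf hg := (add_zero (0 : k)) ▸ hf.add hg
  smul_mem' c f hf := by
    refine squeeze_zero_norm (fun x => ?_)
      (by simpa using (tendsto_zero_iff_norm_tendsto_zero.mp hf).const_mul ‖c‖)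
    simpa [norm_mul] using mul_le_mul_of_nonneg_right (c.norm_coe_le_norm x) (norm_nonneg (f x))

variable {k}

theorem one_notMem_tendstoZeroIdeal (l : Filter X) [l.NeBot] :
    (1 : X →ᵇ k) ∉ tendstoZeroIdeal k l := fun h =>
  one_ne_zero (tendsto_nhds_unique tendsto_const_nhds h)

theorem exists_mul_eq_indicatorBCF {W : Set X} (hW : IsClopen W) (f : X →ᵇ k) {ε : ℝ}
    (hε : 0 < ε) (hf : ∀ x ∈ W, ε ≤ ‖f x‖) : ∃ g : X →ᵇ k, f * g = indicatorBCF k hW := by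
  have hne : ∀ x ∈ W, f x ≠ 0 := fun x hx => norm_pos_iff.mp (hε.trans_le (hf x hx))
  have hcont : Continuous (W.indicator fun x => (f x)⁻¹) :=
    continuous_indicator (by simp [hW.frontier_eq])
      (by rw [hW.isClosed.closure_eq]; exact f.continuous.continuousOn.inv₀ hne)
  have hbound : ∀ x, ‖W.indicator (fun x => (f x)⁻¹) x‖ ≤ ε⁻¹ := fun x => by
    by_cases hx : x ∈ W
    · simpa [hx] using inv_anti₀ hε (hf x hx)
    · simp [hx, hε.le]
  refine ⟨ofNormedAddCommGroup _ hcont ε⁻¹ hbound, ?_⟩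
  ext x
  by_cases hx : x ∈ W
  · simp [coe_indicatorBCF, hx, hne x hx]
  · simp [coe_indicatorBCF, hx]

end BoundedContinuousFunction

namespace ClopenUltrafilter

open BoundedContinuousFunction

variable {X : Type*} [TopologicalSpace X] {k : Type*} [NormedField k] (F : ClopenUltrafilter X)

theorem tendsto_indicatorBCF_iff {U : Set X} (hU : IsClopen U) :
    Filter.Tendsto (indicatorBCF k hU) F.toFilter (𝓝 0) ↔ U ∉ F.sets := by
  refine ⟨fun h hUF => ?_, fun hUF => ?_⟩
  · have hone : indicatorBCF k hU =ᶠ[F.toFilter] 1 :=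
      Filter.eventually_of_mem (F.mem_toFilter_of_mem hUF) fun x hx => by
        simp [coe_indicatorBCF, hx]
    exact one_ne_zero (tendsto_nhds_unique (tendsto_const_nhds.congr' hone.symm) h)
  · have hzero : indicatorBCF k hU =ᶠ[F.toFilter] 0 :=
      Filter.eventually_of_mem (F.mem_toFilter_of_mem ((F.notMem_iff_compl_mem hU).mp hUF))
        fun x hx => by simp [coe_indicatorBCF, notMem_of_mem_compl hx]
    exact tendsto_const_nhds.congr' hzero.symm

theorem exists_mem_mul_eq_indicatorBCF [IsUltrametricDist k] {f : X →ᵇ k}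
    (hf : ¬Filter.Tendsto f F.toFilter (𝓝 0)) :
    ∃ W : Set X, ∃ hW : IsClopen W, W ∈ F.sets ∧ ∃ g : X →ᵇ k, f * g = indicatorBCF k hW := by
  obtain ⟨ε, hε, hsmall⟩ : ∃ ε > 0, ¬∀ᶠ x in F.toFilter, ‖f x‖ < ε := by
    simpa [NormedAddGroup.tendsto_nhds_zero] using hf
  have hW := isClopen_setOf_le_norm f.continuous ε
  have hWF : {x | ε ≤ ‖f x‖} ∈ F.sets := by
    by_contra hWF
    refine hsmall (Filter.mem_of_superset
      (F.mem_toFilter_of_mem ((F.notMem_iff_compl_mem hW).mp hWF)) fun x hx => ?_)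
    simpa using hx
  exact ⟨_, hW, hWF, exists_mul_eq_indicatorBCF hW f hε fun _ hx => hx⟩

theorem tendstoZeroIdeal_isMaximal [IsUltrametricDist k] :
    (tendstoZeroIdeal k F.toFilter).IsMaximal := by
  refine Ideal.isMaximal_iff.mpr ⟨one_notMem_tendstoZeroIdeal _, fun J f hle hf hfJ => ?_⟩
  obtain ⟨W, hW, hWF, g, hfg⟩ := F.exists_mem_mul_eq_indicatorBCF hf
  have hWc : indicatorBCF k hW.compl ∈ tendstoZeroIdeal k F.toFilter :=
    (F.tendsto_indicatorBCF_iff hW.compl).mpr (F.compl_notMem hWF)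
  rw [← indicatorBCF_add_compl hW, ← hfg]
  exact J.add_mem (J.mul_mem_right g hfJ) (hle hWc)

theorem idealUF_tendstoZeroIdeal : idealUF k (tendstoZeroIdeal k F.toFilter) = F.sets := by
  ext U
  refine ⟨fun ⟨hU, hUF⟩ => ?_, fun hUF => ⟨F.isClopen_of_mem U hUF, fun h => ?_⟩⟩
  · by_contra h
    exact hUF ((F.tendsto_indicatorBCF_iff hU).mpr h)
  · exact (F.tendsto_indicatorBCF_iff _).mp h hUF

end ClopenUltrafilter

namespace Ideal.IsPrime

open BoundedContinuousFunction

variable {X : Type*} [TopologicalSpace X] {k : Type*} [NormedField k] {m : Ideal (X →ᵇ k)}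

def clopenUltrafilter (hm : m.IsPrime) : ClopenUltrafilter X where
  sets := idealUF k m
  isClopen_of_mem _ hU := hU.1
  empty_not_mem := fun ⟨_, h⟩ => h ((indicatorBCF_empty (X := X) (k := k)).symm ▸ m.zero_mem)
  inter_mem U := fun ⟨hU, hUm⟩ V ⟨hV, hVm⟩ =>
    ⟨hU.inter hV, fun h =>
      (hm.mem_or_mem ((indicatorBCF_mul (k := k) hU hV).symm ▸ h)).elim hUm hVm⟩
  mem_of_superset U := fun ⟨hU, hUm⟩ V hV hUV =>
    ⟨hV, fun h => hUm (indicatorBCF_mul_of_subset (k := k) hU hV hUV ▸ m.mul_mem_left _ h)⟩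
  mem_or_compl_mem U hU := or_iff_not_imp_left.mpr fun hU_notMem => ⟨hU.compl, fun hUc => by
    have hUm : indicatorBCF k hU ∈ m := by
      by_contra h
      exact hU_notMem ⟨hU, h⟩
    exact hm.ne_top ((Ideal.eq_top_iff_one m).mpr
      (indicatorBCF_add_compl (k := k) hU ▸ m.add_mem hUm hUc))⟩

theorem le_tendstoZeroIdeal [IsUltrametricDist k] (hm : m.IsPrime) :
    m ≤ tendstoZeroIdeal k hm.clopenUltrafilter.toFilter := fun f hf => by
  by_contra h
  obtain ⟨W, hW, ⟨_, hWm⟩, g, hfg⟩ := hm.clopenUltrafilter.exists_mem_mul_eq_indicatorBCF h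
  exact hWm (hfg ▸ m.mul_mem_right g hf)

end Ideal.IsPrime

theorem Ideal.IsMaximal.tendstoZeroIdeal_eq {X : Type*} [TopologicalSpace X] {k : Type*}
    [NormedField k] [IsUltrametricDist k] {m : Ideal (X →ᵇ k)} (hm : m.IsMaximal) :
    BoundedContinuousFunction.tendstoZeroIdeal k hm.isPrime.clopenUltrafilter.toFilter = m :=
  (hm.eq_of_le ((Ideal.ne_top_iff_one _).mpr
    (BoundedContinuousFunction.one_notMem_tendstoZeroIdeal _)) hm.isPrime.le_tendstoZeroIdeal).symm

theorem maximal_ideals_equiv_clopenUltrafilters_general {X : Type*} [TopologicalSpace X]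
    (k : Type*) [NormedField k] [IsUltrametricDist k] :
    ∃ e : {m : Ideal (BoundedContinuousFunction X k) // m.IsMaximal} ≃ ClopenUltrafilter X,
      ∀ m : {m : Ideal (BoundedContinuousFunction X k) // m.IsMaximal},
        (e m).sets = idealUF k m.1 :=
  ⟨{ toFun := fun m => m.2.isPrime.clopenUltrafilter
     invFun := fun F => ⟨_, F.tendstoZeroIdeal_isMaximal⟩
     left_inv := fun m => Subtype.ext m.2.tendstoZeroIdeal_eq
     right_inv := fun F => ClopenUltrafilter.ext F.idealUF_tendstoZeroIdeal },
    fun _ => rfl⟩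

/-- The map `m ↦ F_m = {U ∈ CO(X) : 1_U ∉ m}` is a bijection from the set
of maximal ideals of `C_bd(X,k)` onto the set `UF(X)` of ultrafilters of the Boolean algebra
of clopen subsets of `X`. -/
theorem maximal_ideals_equiv_clopenUltrafilters {X : Type*} [TopologicalSpace X]
    (k : Type*) [NormedField k] [CompleteSpace k] [IsUltrametricDist k] :
    ∃ e : {m : Ideal (BoundedContinuousFunction X k) // m.IsMaximal} ≃ ClopenUltrafilter X,
      ∀ m : {m : Ideal (BoundedContinuousFunction X k) // m.IsMaximal},
        (e m).sets = idealUF k m.1 :=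
  maximal_ideals_equiv_clopenUltrafilters_general k
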